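/- Every Killing field η_a commutes with every invariant field ξ_b: for all a, b ∈ {1,2,3,4}, the Lie bracket [η_a, ξ_b] vanishes identically on ℝ⁴. -/

import Mathlib

/-- Partial derivative `∂f/∂xⁱ` of a real-valued function on `ℝ⁴`. -/
noncomputable def pd (i : Fin 4) (f : (Fin 4 → ℝ) → ℝ) (x : Fin 4 → ℝ) : ℝ :=
  fderiv ℝ f x (Pi.single i 1)
/-- The Killing vector fields `η₁,…,η₄` (indices `0,…,3`). -/
noncomputable def η (k : ℝ) (a : Fin 4) (x : Fin 4 → ℝ) : Fin 4 → ℝ :=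
  ![![1, 0, 0, 0],
    ![0, 0, 0, 1],
    ![k * x 3, 0, 1, 0],
    ![-2, 1, k / 2 * x 2, -(k / 2) * x 3]] a
/-- The invariant vector fields `ξ₁,…,ξ₄` (indices `0,…,3`). -/
noncomputable def ξ (k : ℝ) (i : Fin 4) (x : Fin 4 → ℝ) : Fin 4 → ℝ :=
  ![![-1, 0, 0, 0],
    ![-k * x 2 * Real.exp (-(k * x 1) / 2), 0, 0, -Real.exp (-(k * x 1) / 2)],
    ![0, 0, -Real.exp (k * x 1 / 2), 0],
    ![2, -1, 0, 0]] i
/-- The Lie bracket of vector fields on `ℝ⁴`: `[X,Y]^i = Σ_j (X^j ∂_j Y^i − Y^j ∂_j X^i)`. -/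
noncomputable def lieBracket (X Y : (Fin 4 → ℝ) → Fin 4 → ℝ) (x : Fin 4 → ℝ) (i : Fin 4) : ℝ :=
  ∑ j : Fin 4, (X x j * pd j (fun y => Y y i) x - Y x j * pd j (fun y => X y i) x)

/-! In coordinates `[X, Y] = DY·X − DX·Y`. Each `η_a` is affine, so `Dη_a` is a constant linear map
`dη_a`, and each `ξ_b` depends only on `x², x³`, so `Dξ_b(x)` is explicit as well. The theorem then
reduces to the pointwise identity `dξ_b(x) (η_a x) = dη_a (ξ_b x)`, checked entry by entry. -/

lemma sum_mul_pd (f : (Fin 4 → ℝ) → ℝ) (x v : Fin 4 → ℝ) :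
    ∑ j, v j * pd j f x = fderiv ℝ f x v := by
  conv_rhs => rw [pi_eq_sum_univ' v]
  simp [pd]

lemma lieBracket_apply (X Y : (Fin 4 → ℝ) → Fin 4 → ℝ) (x : Fin 4 → ℝ) (i : Fin 4) :
    lieBracket X Y x i = fderiv ℝ (fun y => Y y i) x (X x) - fderiv ℝ (fun y => X y i) x (Y x) := by
  simp only [lieBracket, Finset.sum_sub_distrib, sum_mul_pd]

noncomputable def dη (k : ℝ) (a : Fin 4) (v : Fin 4 → ℝ) : Fin 4 → ℝ :=
  ![0, 0, ![k * v 3, 0, 0, 0], ![0, 0, k / 2 * v 2, -(k / 2) * v 3]] a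

noncomputable def dξ (k : ℝ) (b : Fin 4) (x v : Fin 4 → ℝ) : Fin 4 → ℝ :=
  ![0,
    ![k ^ 2 / 2 * x 2 * Real.exp (-(k * x 1) / 2) * v 1 - k * Real.exp (-(k * x 1) / 2) * v 2,
      0, 0, k / 2 * Real.exp (-(k * x 1) / 2) * v 1],
    ![0, 0, -(k / 2) * Real.exp (k * x 1 / 2) * v 1, 0],
    0] b

lemma fderiv_η_apply (k : ℝ) (a : Fin 4) (x v : Fin 4 → ℝ) (i : Fin 4) :
    fderiv ℝ (fun y => η k a y i) x v = dη k a v i := by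
  fin_cases a <;> fin_cases i <;>
    simp (disch := fun_prop) [η, dη, fderiv_const_mul, (hasFDerivAt_apply _ _).fderiv]

lemma fderiv_ξ_apply (k : ℝ) (b : Fin 4) (x v : Fin 4 → ℝ) (i : Fin 4) :
    fderiv ℝ (fun y => ξ k b y i) x v = dξ k b x v i := by
  fin_cases b <;> fin_cases i <;>
    simp (disch := fun_prop) [ξ, dξ, div_eq_mul_inv, fderiv_fun_mul, fderiv_exp, fderiv_fun_neg,
      (hasFDerivAt_apply _ _).fderiv] <;> ring

lemma dξ_η_eq_dη_ξ (k : ℝ) (a b : Fin 4) (x : Fin 4 → ℝ) :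
    dξ k b x (η k a x) = dη k a (ξ k b x) := by
  ext i
  fin_cases a <;> fin_cases b <;> fin_cases i <;> simp [dξ, dη, η, ξ]
  -- the first entry for `η₄`, `ξ₂` is the only one left
  ring

theorem eta_xi_commute_general (k : ℝ) (a b : Fin 4) (x : Fin 4 → ℝ) (i : Fin 4) :
    lieBracket (η k a) (ξ k b) x i = 0 := by
  rw [lieBracket_apply, fderiv_ξ_apply, fderiv_η_apply, dξ_η_eq_dη_ξ, sub_self]

/-- Every Killing field `η_a` commutes with every invariant field `ξ_b`:
`[η_a, ξ_b] = 0` identically on `ℝ⁴`. -/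
theorem eta_xi_commute (k : ℝ) (hk : 0 < k) (a b : Fin 4) (x : Fin 4 → ℝ) (i : Fin 4) :
    lieBracket (η k a) (ξ k b) x i = 0 :=
  eta_xi_commute_general k a b x i
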